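/- For all i, j ∈ ℤ₊, in Ĥ one has v̂_i · ū_j = v̂_{i,j}. -/

import Mathlib

namespace HatAlgebra

/-- Basis of the algebra `Ĥ`: vectors `â i` for `i : ℤ`, `ŝ_{0̄,j}` for `j` a positive
integer, and `ŝ_{1̄,3k}`, `ŝ_{2̄,3k}` for `k` a positive integer. -/
inductive HatB : Type
  | a : ℤ → HatB
  | s0 : ℕ+ → HatB
  | s1 : ℕ+ → HatB
  | s2 : ℕ+ → HatB
  deriving DecidableEq

variable (F : Type*) [Field F]

/-- The underlying vector space of `Ĥ`: the free `F`-vector space on `HatB`. -/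
abbrev HatH : Type _ := HatB →₀ F

/-- The basis vector `â i`. -/
noncomputable def aHat (i : ℤ) : HatH F := Finsupp.single (HatB.a i) 1

/-- The element `ŝ_{r̄,j}` of `Ĥ`, with the conventions `ŝ_{r̄,0} = 0` and
`ŝ_{1̄,j} = ŝ_{0̄,j} = ŝ_{2̄,j}` whenever `3 ∤ j`. -/
noncomputable def sHat (r : ZMod 3) (j : ℕ) : HatH F :=
  if h : j = 0 then 0
  else if h3 : 3 ∣ j then
    if r = 0 then Finsupp.single (HatB.s0 ⟨j, Nat.pos_of_ne_zero h⟩) 1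
    else if r = 1 then
      Finsupp.single (HatB.s1 ⟨j / 3,
        Nat.div_pos (Nat.le_of_dvd (Nat.pos_of_ne_zero h) h3) (by norm_num)⟩) 1
    else
      Finsupp.single (HatB.s2 ⟨j / 3,
        Nat.div_pos (Nat.le_of_dvd (Nat.pos_of_ne_zero h) h3) (by norm_num)⟩) 1
  else Finsupp.single (HatB.s0 ⟨j, Nat.pos_of_ne_zero h⟩) 1

/-- The operation `∗`: `(−1) ∗ 1̄ = −1`, `(−1) ∗ 2̄ = 1`, `0 ∗ t̄ = 0`. -/
def hatStar (x : ℤ) (t : ZMod 3) : ℤ :=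
  if x = 0 then 0 else if t = 1 then -1 else if t = 2 then 1 else 0

/-- The coefficient `(δ_{ī,r̄} − 1) ∗ (ī − r̄)` appearing in rule (Ĥ2). -/
def hatC (i r : ZMod 3) : ℤ := hatStar ((if i = r then 1 else 0) - 1) (i - r)

/-- Rule (Ĥ2): the product `â_i · ŝ_{r̄,j}`. -/
noncomputable def aMulS (i : ℤ) (r : ZMod 3) (j : ℕ) : HatH F :=
  (-2 : F) • aHat F i + (aHat F (i - (j : ℤ)) + aHat F (i + (j : ℤ))) - sHat F r j
    - (hatC (i : ZMod 3) r : F) • (sHat F (r - 1) j - sHat F (r + 1) j)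

/-- `ŝ_{0̄,n} + ŝ_{1̄,n} + ŝ_{2̄,n}`. -/
noncomputable def sSum (n : ℕ) : HatH F := sHat F 0 n + sHat F 1 n + sHat F 2 n

/-- For `r ≠ t` in `ℤ/3ℤ`, the signed sum `ŝ_{r̄,n} + ŝ_{t̄,n} − ŝ_{m̄,n}` where `m̄`
is the third residue class (appearing in rules (Ĥ5), (Ĥ6), (Ĥ7)). -/
noncomputable def sT (r t : ZMod 3) (n : ℕ) : HatH F :=
  sHat F r n + sHat F t n - sHat F (-(r + t)) n

/-- Rules (Ĥ3)–(Ĥ7): the product `ŝ_{r̄,i} · ŝ_{t̄,j}`. -/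
noncomputable def sMulS (r : ZMod 3) (i : ℕ) (t : ZMod 3) (j : ℕ) : HatH F :=
  if 3 ∣ i ∧ 3 ∣ j then
    if r = t then
      (2 : F) • (sHat F r i + sHat F r j) - (sHat F r (Nat.dist i j) + sHat F r (i + j))
    else
      (2 : F) • (sT F r t i + sT F r t j) - (sT F r t (Nat.dist i j) + sT F r t (i + j))
  else
    (2 : F) • (sHat F r i + sHat F t j) - (2 : F) • (sSum F (Nat.dist i j) + sSum F (i + j))

/-- The product of `Ĥ` on basis vectors, given by rules (Ĥ1)–(Ĥ7) (extended
symmetrically, since the product is commutative). -/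
noncomputable def mulB : HatB → HatB → HatH F
  | .a i, .a j => (-2 : F) • (aHat F i + aHat F j) + sHat F (i : ZMod 3) (i - j).natAbs
  | .a i, .s0 j => aMulS F i 0 (j : ℕ)
  | .s0 j, .a i => aMulS F i 0 (j : ℕ)
  | .a i, .s1 k => aMulS F i 1 (3 * (k : ℕ))
  | .s1 k, .a i => aMulS F i 1 (3 * (k : ℕ))
  | .a i, .s2 k => aMulS F i 2 (3 * (k : ℕ))
  | .s2 k, .a i => aMulS F i 2 (3 * (k : ℕ))
  | .s0 i, .s0 j => sMulS F 0 (i : ℕ) 0 (j : ℕ)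
  | .s0 i, .s1 k => sMulS F 0 (i : ℕ) 1 (3 * (k : ℕ))
  | .s1 k, .s0 i => sMulS F 0 (i : ℕ) 1 (3 * (k : ℕ))
  | .s0 i, .s2 k => sMulS F 0 (i : ℕ) 2 (3 * (k : ℕ))
  | .s2 k, .s0 i => sMulS F 0 (i : ℕ) 2 (3 * (k : ℕ))
  | .s1 h, .s1 k => sMulS F 1 (3 * (h : ℕ)) 1 (3 * (k : ℕ))
  | .s1 h, .s2 k => sMulS F 1 (3 * (h : ℕ)) 2 (3 * (k : ℕ))
  | .s2 k, .s1 h => sMulS F 1 (3 * (h : ℕ)) 2 (3 * (k : ℕ))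
  | .s2 h, .s2 k => sMulS F 2 (3 * (h : ℕ)) 2 (3 * (k : ℕ))

/-- The commutative bilinear product of `Ĥ`, as a bilinear map. -/
noncomputable def hatMul : HatH F →ₗ[F] HatH F →ₗ[F] HatH F :=
  Finsupp.lift (HatH F →ₗ[F] HatH F) F HatB fun x => Finsupp.lift (HatH F) F HatB (mulB F x)

/-- The product of two elements of `Ĥ`. -/
noncomputable def hmul (x y : HatH F) : HatH F := hatMul F x y


/-- `v̂_i := −2â₀ + (â_i + â_{−i}) − ŝ_{0̄,i}`. -/
noncomputable def vHat (i : ℕ) : HatH F :=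
  (-2 : F) • aHat F 0 + (aHat F (i : ℤ) + aHat F (-(i : ℤ))) - sHat F 0 i

/-- `ū_i := −2â₀ + (â_{−i} + â_i) − (ŝ_{0̄,i} + ŝ_{1̄,i} + ŝ_{2̄,i})`. -/
noncomputable def ubar (i : ℕ) : HatH F :=
  (-2 : F) • aHat F 0 + (aHat F (-(i : ℤ)) + aHat F (i : ℤ))
    - (sHat F 0 i + sHat F 1 i + sHat F 2 i)

/-- `v̂_{i,j} := −2v̂_i − 2v̂_j + v̂_{|i−j|} + v̂_{i+j}`. -/
noncomputable def vij (i j : ℕ) : HatH F :=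
  (-2 : F) • vHat F i + (-2 : F) • vHat F j + vHat F (Nat.dist i j) + vHat F (i + j)

/-!
Expand `v̂_i ū_j` bilinearly. In characteristic 5 the product `â₀ ū_j` vanishes (all of its
coefficients are multiples of 5) and `ŝ_{0̄,i} â₀ = v̂_i`. The correction terms
`(δ_{ī,r̄} − 1) ∗ (ī − r̄)` of (Ĥ2) cancel between `â_j` and `â_{−j}`, and summed over `r̄` they
reduce `â_x (ŝ_{0̄,j} + ŝ_{1̄,j} + ŝ_{2̄,j})` to `3 (−2â_x + â_{x−j} + â_{x+j} − ŝ_{x̄,j})`.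
What is left is a comparison of coefficients modulo 5, in the three cases `3 ∣ i, 3 ∣ j`;
`3 ∣ i, 3 ∤ j`; `3 ∤ i`, which decide how the `ŝ_{r̄,n}` collapse.
-/

lemma zmod_three_cases (r : ZMod 3) : r = 0 ∨ r = 1 ∨ r = 2 := by decide +revert

lemma natAbs_sub_eq_dist (m n : ℕ) : ((m : ℤ) - n).natAbs = Nat.dist m n := by
  unfold Nat.dist; omega

section

variable {F}

lemma hmul_add_left (x y z : HatH F) : hmul F (x + y) z = hmul F x z + hmul F y z := by
  simp [hmul]

lemma hmul_add_right (x y z : HatH F) : hmul F x (y + z) = hmul F x y + hmul F x z := by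
  simp [hmul]

lemma hmul_sub_left (x y z : HatH F) : hmul F (x - y) z = hmul F x z - hmul F y z := by
  simp [hmul]

lemma hmul_sub_right (x y z : HatH F) : hmul F x (y - z) = hmul F x y - hmul F x z := by
  simp [hmul]

lemma hmul_smul_left (c : F) (x y : HatH F) : hmul F (c • x) y = c • hmul F x y := by
  simp [hmul]

lemma hmul_smul_right (c : F) (x y : HatH F) : hmul F x (c • y) = c • hmul F x y := by
  simp [hmul]

lemma hmul_zero_left (y : HatH F) : hmul F 0 y = 0 := by simp [hmul]

lemma hmul_zero_right (x : HatH F) : hmul F x 0 = 0 := by simp [hmul]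

lemma hmul_single_single (b c : HatB) :
    hmul F (Finsupp.single b 1) (Finsupp.single c 1) = mulB F b c := by
  simp [hmul, hatMul]

@[simp] lemma sHat_zero_right (r : ZMod 3) : sHat F r 0 = 0 := by simp [sHat]

lemma sHat_of_not_dvd (r : ZMod 3) {n : ℕ} (hn : ¬ 3 ∣ n) : sHat F r n = sHat F 0 n := by
  have h0 : n ≠ 0 := by rintro rfl; exact hn (dvd_zero 3)
  simp [sHat, h0, hn]

lemma sHat_zero_eq_single {n : ℕ} (hn : 0 < n) :
    sHat F 0 n = Finsupp.single (HatB.s0 ⟨n, hn⟩) 1 := by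
  simp [sHat, hn.ne']

lemma sHat_one_three_mul (k : ℕ+) : sHat F 1 (3 * k) = Finsupp.single (HatB.s1 k) 1 := by
  simp [sHat]; rfl

lemma sHat_two_three_mul (k : ℕ+) : sHat F 2 (3 * k) = Finsupp.single (HatB.s2 k) 1 := by
  simp [sHat, show (2 : ZMod 3) ≠ 0 by decide, show (2 : ZMod 3) ≠ 1 by decide]; rfl

lemma aMulS_zero_right (x : ℤ) (r : ZMod 3) : aMulS F x r 0 = 0 := by
  simp only [aMulS, sHat_zero_right, Nat.cast_zero, sub_zero, add_zero, smul_zero, sub_self]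
  module

lemma aMulS_of_not_dvd (x : ℤ) (r : ZMod 3) {n : ℕ} (hn : ¬ 3 ∣ n) :
    aMulS F x r n = aMulS F x 0 n := by
  simp only [aMulS, sHat_of_not_dvd _ hn, sub_self, smul_zero]

lemma sMulS_of_not_dvd_right (r t : ZMod 3) (m : ℕ) {n : ℕ} (hn : ¬ 3 ∣ n) :
    sMulS F r m t n = sMulS F r m 0 n := by
  simp only [sMulS, hn, and_false, if_false, sHat_of_not_dvd t hn]

lemma aHat_mul_aHat (x y : ℤ) : hmul F (aHat F x) (aHat F y) =
    (-2 : F) • (aHat F x + aHat F y) + sHat F (x : ZMod 3) (x - y).natAbs :=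
  hmul_single_single _ _

lemma aHat_mul_sHat (x : ℤ) (r : ZMod 3) (n : ℕ) :
    hmul F (aHat F x) (sHat F r n) = aMulS F x r n := by
  rcases Nat.eq_zero_or_pos n with rfl | hn
  · rw [sHat_zero_right, hmul_zero_right, aMulS_zero_right]
  by_cases h3 : 3 ∣ n
  · obtain ⟨k, rfl⟩ := h3
    lift k to ℕ+ using by omega
    rcases zmod_three_cases r with rfl | rfl | rfl
    · rw [sHat_zero_eq_single hn]; exact hmul_single_single _ _
    · rw [sHat_one_three_mul]; exact hmul_single_single _ _
    · rw [sHat_two_three_mul]; exact hmul_single_single _ _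
  · rw [sHat_of_not_dvd r h3, aMulS_of_not_dvd x r h3, sHat_zero_eq_single hn]
    exact hmul_single_single _ _

lemma sHat_zero_mul_aHat (m : ℕ) (x : ℤ) :
    hmul F (sHat F 0 m) (aHat F x) = aMulS F x 0 m := by
  rcases Nat.eq_zero_or_pos m with rfl | hm
  · rw [sHat_zero_right, hmul_zero_left, aMulS_zero_right]
  rw [sHat_zero_eq_single hm]; exact hmul_single_single _ _

lemma sHat_zero_mul_sHat (t : ZMod 3) {m n : ℕ} (hm : 0 < m) (hn : 0 < n) :
    hmul F (sHat F 0 m) (sHat F t n) = sMulS F 0 m t n := by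
  rw [sHat_zero_eq_single hm]
  by_cases h3 : 3 ∣ n
  · obtain ⟨k, rfl⟩ := h3
    lift k to ℕ+ using by omega
    rcases zmod_three_cases t with rfl | rfl | rfl
    · rw [sHat_zero_eq_single hn]; exact hmul_single_single _ _
    · rw [sHat_one_three_mul]; exact hmul_single_single _ _
    · rw [sHat_two_three_mul]; exact hmul_single_single _ _
  · rw [sHat_of_not_dvd t h3, sMulS_of_not_dvd_right 0 t m h3, sHat_zero_eq_single hn]
    exact hmul_single_single _ _

lemma aHat_mul_sSum (x : ℤ) (n : ℕ) :
    hmul F (aHat F x) (sSum F n) =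
      (3 : F) • ((-2 : F) • aHat F x + (aHat F (x - n) + aHat F (x + n))
        - sHat F (x : ZMod 3) n) := by
  simp only [sSum, hmul_add_right, aHat_mul_sHat, aMulS]
  have h0 : (0 : ZMod 3) - 1 = 2 := by decide
  have h1 : (1 : ZMod 3) + 1 = 2 := by decide
  have h2 : (2 : ZMod 3) - 1 = 1 := by decide
  have h2' : (2 : ZMod 3) + 1 = 0 := by decide
  rcases zmod_three_cases (x : ZMod 3) with h | h | h <;>
    simp +decide only [h, hatC, hatStar, h0, h1, h2, h2', sub_self, zero_add] <;>
    push_cast <;> module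

lemma ubar_eq (n : ℕ) :
    ubar F n = (-2 : F) • aHat F 0 + (aHat F (-n) + aHat F n) - sSum F n := rfl

lemma aHat_mul_ubar (x : ℤ) (n : ℕ) :
    hmul F (aHat F x) (ubar F n) =
      (6 : F) • aHat F x + (4 : F) • aHat F 0 - (2 : F) • (aHat F (-n) + aHat F n)
        - (3 : F) • (aHat F (x - n) + aHat F (x + n))
        + ((-2 : F) • sHat F x x.natAbs + sHat F x (x + n).natAbs + sHat F x (x - n).natAbs
          + (3 : F) • sHat F x n) := by
  simp only [ubar_eq, hmul_add_right, hmul_sub_right, hmul_smul_right, aHat_mul_aHat,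
    aHat_mul_sSum, sub_zero, sub_neg_eq_add]
  module

lemma aHat_zero_mul_ubar [CharP F 5] (n : ℕ) : hmul F (aHat F 0) (ubar F n) = 0 := by
  rw [aHat_mul_ubar]
  simp only [zero_sub, zero_add, Int.natAbs_zero, Int.natAbs_neg, Int.natAbs_natCast,
    sHat_zero_right, Int.cast_zero]
  match_scalars <;> grind

noncomputable def sPair (r : ZMod 3) (k : ℕ) : HatH F := sHat F r k + sHat F (-r) k

lemma sPair_zero (k : ℕ) : sPair (0 : ZMod 3) k = (2 : F) • sHat F 0 k := by
  rw [sPair, neg_zero, two_smul]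

lemma sPair_of_ne_zero {r : ZMod 3} (hr : r ≠ 0) (k : ℕ) :
    sPair r k = sSum F k - sHat F 0 k := by
  rcases zmod_three_cases r with rfl | rfl | rfl
  · exact absurd rfl hr
  · rw [sPair, show -(1 : ZMod 3) = 2 by decide, sSum]; abel
  · rw [sPair, show -(2 : ZMod 3) = 1 by decide, sSum]; abel

lemma sPair_natCast_self (m : ℕ) : sPair (m : ZMod 3) m = (2 : F) • sHat F 0 m := by
  by_cases h3 : 3 ∣ m
  · rw [(ZMod.natCast_eq_zero_iff m 3).mpr h3, sPair_zero]
  · rw [sPair, sHat_of_not_dvd (m : ZMod 3) h3, sHat_of_not_dvd (-(m : ZMod 3)) h3, two_smul]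

lemma sSum_of_not_dvd {n : ℕ} (hn : ¬ 3 ∣ n) : sSum F n = (3 : F) • sHat F 0 n := by
  rw [sSum, sHat_of_not_dvd 1 hn, sHat_of_not_dvd 2 hn]; module

lemma aHat_add_aHat_neg_mul_ubar (m n : ℕ) :
    hmul F (aHat F m + aHat F (-m)) (ubar F n) =
      (6 : F) • (aHat F m + aHat F (-m)) + (8 : F) • aHat F 0
        - (4 : F) • (aHat F (-n) + aHat F n)
        - (3 : F) • (aHat F (m - n) + aHat F (n - m) + aHat F (m + n) + aHat F (-(m + n)))
        + ((-4 : F) • sHat F 0 m + sPair (m : ZMod 3) (Nat.dist m n)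
          + sPair (m : ZMod 3) (m + n) + (3 : F) • sPair (m : ZMod 3) n) := by
  have hsub : ((m : ℤ) - n).natAbs = Nat.dist m n := natAbs_sub_eq_dist m n
  have hsub_neg : (-(m : ℤ) + n).natAbs = Nat.dist m n := by unfold Nat.dist; omega
  have hadd : ((m : ℤ) + n).natAbs = m + n := by omega
  have hadd_neg : (-(m : ℤ) - n).natAbs = m + n := by omega
  have hx : -(m : ℤ) + n = n - m := neg_add_eq_sub _ _
  have hy : -(m : ℤ) - n = -(m + n) := (neg_add' _ _).symm
  have hself := sPair_natCast_self (F := F) m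
  rw [hmul_add_left, aHat_mul_ubar, aHat_mul_ubar]
  simp only [hsub, hsub_neg, hadd, hadd_neg, Int.natAbs_neg, Int.natAbs_natCast, Int.cast_neg,
    Int.cast_natCast]
  simp only [hx, hy, sPair] at hself ⊢
  linear_combination (norm := module) (-2 : F) • hself

lemma sHat_zero_mul_ubar (m n : ℕ) :
    hmul F (sHat F 0 m) (ubar F n) =
      (-2 : F) • vHat F m - (2 : F) • (aHat F (-n) + aHat F n)
        + (aHat F (m - n) + aHat F (n - m) + aHat F (m + n) + aHat F (-(m + n)))
        - (2 : F) • sHat F 0 m - hmul F (sHat F 0 m) (sSum F n) := by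
  have hC : hatC (-(n : ZMod 3)) 0 = -hatC (n : ZMod 3) 0 := by
    generalize (n : ZMod 3) = r; decide +revert
  rw [ubar_eq]
  simp only [hmul_add_right, hmul_sub_right, hmul_smul_right, sHat_zero_mul_aHat, aMulS, vHat,
    Int.cast_neg, Int.cast_natCast, Int.cast_zero, hC, zero_sub, zero_add,
    show -(n : ℤ) - m = -(m + n) by ring, show -(n : ℤ) + m = m - n by ring,
    show (n : ℤ) + m = m + n by ring, show hatC 0 0 = 0 by decide]
  module

lemma sHat_zero_mul_sSum_of_dvd {m n : ℕ} (hm : 0 < m) (hn : 0 < n) (h3m : 3 ∣ m)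
    (h3n : 3 ∣ n) :
    hmul F (sHat F 0 m) (sSum F n) =
      (3 : F) • ((2 : F) • (sHat F 0 m + sHat F 0 n)
        - (sHat F 0 (Nat.dist m n) + sHat F 0 (m + n))) := by
  simp only [sSum, hmul_add_right, sHat_zero_mul_sHat _ hm hn, sMulS, sT, h3m, h3n, and_self,
    if_true, show (0 : ZMod 3) ≠ 1 by decide, show (0 : ZMod 3) ≠ 2 by decide, if_false,
    show -((0 : ZMod 3) + 1) = 2 by decide, show -((0 : ZMod 3) + 2) = 1 by decide]
  module

lemma sHat_zero_mul_sSum_of_not_dvd {m n : ℕ} (hm : 0 < m) (hn : 0 < n)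
    (h3 : ¬ (3 ∣ m ∧ 3 ∣ n)) :
    hmul F (sHat F 0 m) (sSum F n) =
      (6 : F) • sHat F 0 m + (2 : F) • sSum F n
        - (6 : F) • (sSum F (Nat.dist m n) + sSum F (m + n)) := by
  simp only [sSum, hmul_add_right, sHat_zero_mul_sHat _ hm hn, sMulS, h3, if_false]
  module

lemma vHat_dist (i j : ℕ) :
    vHat F (Nat.dist i j) =
      (-2 : F) • aHat F 0 + (aHat F (i - j) + aHat F (j - i)) - sHat F 0 (Nat.dist i j) := by
  rcases le_total i j with h | h
  · rw [vHat, Nat.dist_eq_sub_of_le h, Nat.cast_sub h, neg_sub, add_comm (aHat F _)]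
  · rw [vHat, Nat.dist_eq_sub_of_le_right h, Nat.cast_sub h, neg_sub]

end

/-- For all `i, j ∈ ℤ₊`, `v̂_i · ū_j = v̂_{i,j}`. -/
theorem vHat_mul_ubar [CharP F 5] (i j : ℕ) (hi : 0 < i) (hj : 0 < j) :
    hmul F (vHat F i) (ubar F j) = vij F i j := by
  have hv : vHat F i = (-2 : F) • aHat F 0 + (aHat F i + aHat F (-i)) - sHat F 0 i := rfl
  rw [hv, hmul_sub_left, hmul_add_left, hmul_smul_left, aHat_zero_mul_ubar,
    aHat_add_aHat_neg_mul_ubar, sHat_zero_mul_ubar, vij, vHat_dist]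
  simp only [vHat, Nat.cast_add]
  by_cases h3i : 3 ∣ i
  · simp only [(ZMod.natCast_eq_zero_iff i 3).mpr h3i, sPair_zero]
    by_cases h3j : 3 ∣ j
    · rw [sHat_zero_mul_sSum_of_dvd hi hj h3i h3j]
      match_scalars <;> grind
    · have h3d : ¬ 3 ∣ Nat.dist i j := by unfold Nat.dist; omega
      have h3s : ¬ 3 ∣ i + j := by omega
      rw [sHat_zero_mul_sSum_of_not_dvd hi hj (fun h => h3j h.2), sSum_of_not_dvd h3j,
        sSum_of_not_dvd h3d, sSum_of_not_dvd h3s]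
      match_scalars <;> grind
  · have hi0 : (i : ZMod 3) ≠ 0 := fun h => h3i ((ZMod.natCast_eq_zero_iff i 3).mp h)
    simp only [sPair_of_ne_zero hi0]
    rw [sHat_zero_mul_sSum_of_not_dvd hi hj (fun h => h3i h.1)]
    match_scalars <;> grind

end HatAlgebra
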